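/- For every integer k ≥ 1 and natural number n, the number of binary words of length n such that every maximal factor of the form 0^a 1^b with a > 0 satisfies ka > b, denoted w_n, satisfies the (k+1)-step Fibonacci recurrence w_n = w_{n-1} + w_{n-2} + ... + w_{n-(k+1)} for n ≥ k+1. -/

import Mathlib

/-- `isValid c d w` says every maximal factor of `w` of the form `0^a 1^b`
with `a > 0` satisfies `a * (c/d) > b`, i.e. `c*a > d*b`.
Here `false` plays the role of `0` and `true` of `1`; maximality is expressed
by requiring the prefix to end with `1` (or be empty) and the suffix to start
with `0` (or be empty). -/
def isValid (c d : ℕ) (w : List Bool) : Prop :=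
  ∀ p s : List Bool, ∀ a b : ℕ,
    w = p ++ List.replicate a false ++ List.replicate b true ++ s →
    (p = [] ∨ p.getLast? = some true) →
    (s = [] ∨ s.head? = some false) →
    0 < a → d * b < c * a

/-- number of words of length `n` in `W_{c/d,n}` -/
noncomputable def wcount (c d n : ℕ) : ℕ :=
  Nat.card {w : List Bool // w.length = n ∧ isValid c d w}

/-!
Let `f n t` count the words `x` of length `n` for which `x ++ t` is valid, so `w_n = f n []`.
Splitting `x` by its last letter gives `f (n+1) t = f n (1 :: t) + f n (0 :: t)`. Validity of a
word ending in a block is local: `x 0^a 1^b` is valid iff `x` is and `b < k (z + a)`, where `z` is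
the number of trailing zeros of `x`. Hence a final `0 1^j` with `j < k` costs nothing
(`f n (0 1^j) = w_n`), a final `1 0 1^(j+k)` is fatal, and a final `0 0 1^(j+k)` may be traded
for `0 1^j`; together these give `f (n+1) 1^(j+k) = f n 1^j`. Unrolling `w_(n+k+1) = f (n+k+1) []`
through `f (n+k+1-i) 1^i` for `i ≤ k` gives `w_(n+k) + ⋯ + w_(n+1) + f (n+1) 1^k`, and the last
term is `w_n`.
-/

open List

lemma replicate_false_append_replicate_true_ne_append {a b : ℕ} {m t : List Bool}
    (hm : true ∈ m) (ht : false ∈ t) : replicate a false ++ replicate b true ≠ m ++ t := by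
  intro h
  have hsorted : (replicate a false ++ replicate b true).Pairwise (· ≤ ·) :=
    pairwise_append.2 ⟨by simp [pairwise_replicate], by simp [pairwise_replicate],
      fun x hx y hy => by simp [eq_of_mem_replicate hx, eq_of_mem_replicate hy]⟩
  rw [h] at hsorted
  exact absurd ((pairwise_append.1 hsorted).2.2 true hm false ht) (by decide)

def trailingZeros (x : List Bool) : ℕ := (x.reverse.takeWhile (!·)).length

@[simp] lemma trailingZeros_nil : trailingZeros [] = 0 := rfl

@[simp] lemma trailingZeros_append_true (x : List Bool) : trailingZeros (x ++ [true]) = 0 := by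
  simp [trailingZeros]

@[simp] lemma trailingZeros_append_false (x : List Bool) :
    trailingZeros (x ++ [false]) = trailingZeros x + 1 := by
  simp [trailingZeros]

section isValid

variable {c d : ℕ}

lemma isValid_replicate_true (b : ℕ) : isValid c d (replicate b true) := by
  intro p s a' b' h _ _ ha'
  have : false ∈ replicate b true := by
    rw [h]; simp [Nat.pos_iff_ne_zero.1 ha']
  simp [mem_replicate] at this

lemma isValid_block {a b : ℕ} (ha : 0 < a) :
    isValid c d (replicate a false ++ replicate b true) ↔ d * b < c * a := by
  refine ⟨fun h => by simpa using h [] [] a b (by simp) (.inl rfl) (.inl rfl) ha, ?_⟩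
  intro hlt p s a' b' h hp hs ha'
  have hc : 0 < c := Nat.pos_of_mul_pos_right (Nat.zero_le _ |>.trans_lt hlt)
  obtain rfl : p = [] := by
    refine hp.resolve_right fun hp => replicate_false_append_replicate_true_ne_append
      (mem_of_getLast? hp) (t := replicate a' false ++ replicate b' true ++ s) ?_
      (by simpa [append_assoc] using h)
    simp [Nat.pos_iff_ne_zero.1 ha']
  -- `hs` also admits a factor `0^a'` inside a longer run of zeros; it only needs `0 < c * a'`.
  rcases Nat.eq_zero_or_pos b' with rfl | hb'
  · simpa using Nat.mul_pos hc ha'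
  obtain rfl : s = [] := by
    refine hs.resolve_right fun hs => replicate_false_append_replicate_true_ne_append
      (m := replicate a' false ++ replicate b' true) ?_ (mem_of_mem_head? hs) (by simpa using h)
    simp [Nat.pos_iff_ne_zero.1 hb']
  have hzeros : a = a' := by simpa [count_replicate] using congrArg (count false) h
  have hones : b = b' := by simpa [count_replicate] using congrArg (count true) h
  rwa [← hzeros, ← hones]

lemma isValid_append {p s : List Bool} (hp : p = [] ∨ p.getLast? = some true)
    (hs : s = [] ∨ s.head? = some false) :
    isValid c d (p ++ s) ↔ isValid c d p ∧ isValid c d s := by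
  constructor
  · intro h
    constructor
    · intro q r a b hqr hq hr ha
      refine h q (r ++ s) a b (by simp [hqr]) hq ?_ ha
      rcases hr with rfl | hr
      · simpa using hs
      · exact .inr (by simp [head?_append, hr])
    · intro q r a b hqr hq hr ha
      refine h (p ++ q) r a b (by simp [hqr]) ?_ hr ha
      rcases hq with rfl | hq
      · simpa using hp
      · exact .inr (by simp [getLast?_append, hq])
  · rintro ⟨hvp, hvs⟩ q r a b h hq hr ha
    rw [append_assoc, append_assoc, append_eq_append_iff] at h
    rcases h with ⟨e, rfl, rfl⟩ | ⟨e, rfl, h⟩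
    · refine hvs e r a b (by simp) ?_ hr ha
      rcases eq_or_ne e [] with rfl | he
      · exact .inl rfl
      · refine .inr ?_
        rcases hq with hq | hq
        · simp_all
        · rwa [getLast?_append_of_ne_nil _ he] at hq
    rw [← append_assoc, append_eq_append_iff] at h
    rcases h with ⟨f, rfl, rfl⟩ | ⟨f, hblk, rfl⟩
    · refine hvp q f a b (by simp) hq ?_ ha
      rcases eq_or_ne f [] with rfl | hf
      · exact .inl rfl
      · refine .inr ?_
        rcases hr with hr | hr
        · simp_all
        · rwa [head?_append_of_ne_nil _ hf] at hr
    rcases eq_or_ne e [] with rfl | he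
    · exact hvs [] r a b (by simp [hblk]) (.inl rfl) hr ha
    rcases eq_or_ne f [] with rfl | hf
    · exact hvp q [] a b (by simp [hblk]) hq (.inl rfl) ha
    -- otherwise the factor `0^a 1^b` would contain the `1 0` where `p` meets `s`
    exfalso
    refine replicate_false_append_replicate_true_ne_append ?_ ?_ hblk
    · have := hp.resolve_left (by simp [he])
      rw [getLast?_append_of_ne_nil _ he] at this
      exact mem_of_getLast? this
    · have := hs.resolve_left (by simp [hf])
      rw [head?_append_of_ne_nil _ hf] at this
      exact mem_of_mem_head? this

lemma isValid_append_block_of_getLast {p : List Bool} (hp : p = [] ∨ p.getLast? = some true)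
    {a b : ℕ} (ha : 0 < a) :
    isValid c d (p ++ replicate a false ++ replicate b true) ↔
      isValid c d p ∧ d * b < c * a := by
  have hs : (replicate a false ++ replicate b true).head? = some false := by
    obtain ⟨a, rfl⟩ := Nat.exists_eq_add_one_of_ne_zero ha.ne'
    simp [replicate_succ]
  rw [append_assoc, isValid_append hp (.inr hs), isValid_block ha]

lemma isValid_append_block (x : List Bool) {a b : ℕ} (ha : 0 < a) :
    isValid c d (x ++ replicate a false ++ replicate b true) ↔
      isValid c d x ∧ d * b < c * (trailingZeros x + a) := by
  induction x using List.reverseRecOn generalizing a b with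
  | nil => simpa using isValid_append_block_of_getLast (.inl rfl) ha
  | append_singleton y x ih =>
    cases x with
    | false =>
      have hy := ih (a := a + 1) (b := b) (by omega)
      have hy₀ := ih (a := 1) (b := 0) one_pos
      simp only [append_assoc, singleton_append, replicate_zero, append_nil, mul_zero,
        replicate_one, trailingZeros_append_false] at hy hy₀ ⊢
      rw [← replicate_succ, hy, hy₀, add_assoc, add_comm 1 a]
      constructor
      · rintro ⟨hv, hlt⟩
        have hc : 0 < c := Nat.pos_of_mul_pos_right (hlt.trans_le' (Nat.zero_le _))
        exact ⟨⟨hv, Nat.mul_pos hc (Nat.succ_pos _)⟩, hlt⟩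
      · rintro ⟨⟨hv, -⟩, hlt⟩
        exact ⟨hv, hlt⟩
    | true =>
      simpa using isValid_append_block_of_getLast (p := y ++ [true]) (.inr (by simp)) ha

end isValid

lemma card_length_succ (n : ℕ) (P : List Bool → Prop) :
    Nat.card {x : List Bool // x.length = n + 1 ∧ P x} =
      Nat.card {x : List Bool // x.length = n ∧ P (x ++ [true])} +
        Nat.card {x : List Bool // x.length = n ∧ P (x ++ [false])} := by
  have hfin (Q : List Bool → Prop) : Finite {x : List Bool // x.length = n ∧ Q x} :=
    ((finite_length_eq Bool n).subset fun _ hx => hx.1).to_subtype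
  have := hfin (P <| · ++ [true])
  have := hfin (P <| · ++ [false])
  rw [← Nat.card_sum]
  symm
  refine Nat.card_congr (Equiv.ofBijective
    (Sum.elim (fun x => ⟨x.1 ++ [true], by simp [x.2.1], x.2.2⟩)
      (fun x => ⟨x.1 ++ [false], by simp [x.2.1], x.2.2⟩)) ⟨?_, ?_⟩)
  · rintro (⟨x, hx⟩ | ⟨x, hx⟩) (⟨y, hy⟩ | ⟨y, hy⟩) h <;> simp_all
  · rintro ⟨x, hlen, hx⟩
    obtain ⟨y, b, rfl⟩ := (eq_nil_or_concat' x).resolve_left (by rintro rfl; simp at hlen)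
    have hy : y.length = n := by simpa using hlen
    cases b
    · exact ⟨.inr ⟨y, hy, hx⟩, rfl⟩
    · exact ⟨.inl ⟨y, hy, hx⟩, rfl⟩

noncomputable def prefixCount (c d n : ℕ) (t : List Bool) : ℕ :=
  Nat.card {x : List Bool // x.length = n ∧ isValid c d (x ++ t)}

section prefixCount

variable {c d k : ℕ}

lemma wcount_eq_prefixCount_nil (c d n : ℕ) : wcount c d n = prefixCount c d n [] := by
  simp [wcount, prefixCount]

lemma prefixCount_zero {t : List Bool} (h : isValid c d t) : prefixCount c d 0 t = 1 :=
  Nat.card_eq_one_iff_exists.2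
    ⟨⟨[], rfl, h⟩, fun ⟨_, hx, _⟩ => Subtype.ext (length_eq_zero_iff.1 hx)⟩

lemma prefixCount_eq_zero {n : ℕ} {t : List Bool}
    (h : ∀ x : List Bool, x.length = n → ¬ isValid c d (x ++ t)) : prefixCount c d n t = 0 :=
  @Nat.card_of_isEmpty _ ⟨fun ⟨x, hx, hv⟩ => h x hx hv⟩

lemma prefixCount_succ (c d n : ℕ) (t : List Bool) :
    prefixCount c d (n + 1) t = prefixCount c d n (true :: t) + prefixCount c d n (false :: t) := by
  simpa [prefixCount] using card_length_succ n (isValid c d <| · ++ t)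

lemma isValid_append_false_replicate (x : List Bool) (j : ℕ) :
    isValid k 1 (x ++ false :: replicate j true) ↔
      isValid k 1 x ∧ j < k * (trailingZeros x + 1) := by
  simpa using isValid_append_block (c := k) (d := 1) x (a := 1) (b := j) one_pos

lemma isValid_append_false_false_replicate (x : List Bool) (j : ℕ) :
    isValid k 1 (x ++ false :: false :: replicate j true) ↔
      isValid k 1 x ∧ j < k * (trailingZeros x + 2) := by
  simpa [replicate_succ] using isValid_append_block (c := k) (d := 1) x (a := 2) (b := j) two_pos

lemma not_isValid_append_false_replicate_add {x : List Bool} (hx : trailingZeros x = 0) (j : ℕ) :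
    ¬ isValid k 1 (x ++ false :: replicate (j + k) true) := by
  simp [isValid_append_false_replicate, hx]

lemma prefixCount_false_replicate_of_lt (n : ℕ) {j : ℕ} (hj : j < k) :
    prefixCount k 1 n (false :: replicate j true) = wcount k 1 n := by
  refine Nat.card_congr (Equiv.subtypeEquivRight fun x => and_congr_right fun _ => ?_)
  rw [isValid_append_false_replicate, and_iff_left_iff_imp]
  exact fun _ => hj.trans_le (Nat.le_mul_of_pos_right k (Nat.succ_pos _))

lemma prefixCount_succ_false_replicate_add (n j : ℕ) :
    prefixCount k 1 (n + 1) (false :: replicate (j + k) true) =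
      prefixCount k 1 n (false :: replicate j true) := by
  have hempty : prefixCount k 1 n (true :: false :: replicate (j + k) true) = 0 :=
    prefixCount_eq_zero fun x _ hx =>
      not_isValid_append_false_replicate_add (trailingZeros_append_true x) j (by simpa using hx)
  have hshift : prefixCount k 1 n (false :: false :: replicate (j + k) true) =
      prefixCount k 1 n (false :: replicate j true) := by
    refine Nat.card_congr (Equiv.subtypeEquivRight fun x => and_congr_right fun _ => ?_)
    rw [isValid_append_false_false_replicate, isValid_append_false_replicate,
      show k * (trailingZeros x + 2) = k * (trailingZeros x + 1) + k by ring,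
      Nat.add_lt_add_iff_right]
  rw [prefixCount_succ, hempty, hshift, zero_add]

lemma prefixCount_succ_replicate_add (n j : ℕ) :
    prefixCount k 1 (n + 1) (replicate (j + k) true) = prefixCount k 1 n (replicate j true) := by
  induction n generalizing j with
  | zero =>
    have hempty : prefixCount k 1 0 (false :: replicate (j + k) true) = 0 :=
      prefixCount_eq_zero fun x hx => by
        rw [length_eq_zero_iff.1 hx]
        exact not_isValid_append_false_replicate_add trailingZeros_nil j
    rw [prefixCount_succ, ← replicate_succ, hempty, prefixCount_zero (isValid_replicate_true _),
      prefixCount_zero (isValid_replicate_true _)]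
  | succ n ih =>
    rw [prefixCount_succ, ← replicate_succ, show j + k + 1 = j + 1 + k by omega, ih,
      prefixCount_succ_false_replicate_add, prefixCount_succ (t := replicate j true),
      replicate_succ]

lemma prefixCount_add_replicate_sub (m : ℕ) {i : ℕ} (hi : i ≤ k) :
    prefixCount k 1 (m + i) (replicate (k - i) true) =
      ∑ l ∈ Finset.range i, wcount k 1 (m + l) + prefixCount k 1 m (replicate k true) := by
  induction i with
  | zero => simp
  | succ i ih =>
    rw [← add_assoc, prefixCount_succ, ← replicate_succ, show k - (i + 1) + 1 = k - i by omega,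
      ih (by omega), prefixCount_false_replicate_of_lt _ (by omega), Finset.sum_range_succ]
    ring

end prefixCount

theorem stmt5_general (k : ℕ) (n : ℕ) (hn : k + 1 ≤ n) :
    wcount k 1 n = ∑ i ∈ Finset.range (k + 1), wcount k 1 (n - (i + 1)) := by
  obtain ⟨m, rfl⟩ := Nat.exists_eq_add_of_le' hn
  have hlast := prefixCount_succ_replicate_add (k := k) m 0
  have hunroll := prefixCount_add_replicate_sub (k := k) (m + 1) le_rfl
  rw [zero_add] at hlast
  rw [Nat.sub_self, hlast] at hunroll
  simp only [replicate_zero, ← wcount_eq_prefixCount_nil] at hunroll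
  calc wcount k 1 (m + (k + 1))
      = ∑ l ∈ Finset.range k, wcount k 1 (m + 1 + l) + wcount k 1 m := by
        rw [← hunroll, add_comm k, add_assoc]
    _ = ∑ i ∈ Finset.range (k + 1), wcount k 1 (m + i) := by
        simp only [Finset.sum_range_succ', add_zero, add_assoc, add_comm 1]
    _ = ∑ i ∈ Finset.range (k + 1), wcount k 1 (m + (k + 1) - (i + 1)) := by
        rw [← Finset.sum_range_reflect]
        exact Finset.sum_congr rfl fun i hi => congrArg _ (by simp at hi; omega)

theorem stmt5 (k : ℕ) (hk : 1 ≤ k) (n : ℕ) (hn : k + 1 ≤ n) :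
    wcount k 1 n = ∑ i ∈ Finset.range (k + 1), wcount k 1 (n - (i + 1)) :=
  stmt5_general k n hn
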